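/- In the AF F_T built from a tree T, the argument a_σ belongs to the grounded extension if and only if σ does not lie on an infinite path of T (equivalently, σ is ranked). -/

import Mathlib

def defenseFn {A : Type*} (att : A → A → Prop) (S : Set A) : Set A :=
  {x | ∀ y, att y x → ∃ z ∈ S, att z y}

/-- `Gr` is the grounded extension: the least fixed point of the defense function. -/
def IsGrounded {A : Type*} (att : A → A → Prop) (Gr : Set A) : Prop :=
  defenseFn att Gr = Gr ∧ ∀ S, defenseFn att S = S → Gr ⊆ S

/-- A tree: a prefix-closed set of finite sequences of naturals. -/
def IsTree (T : Set (List ℕ)) : Prop := ∀ σ ∈ T, ∀ τ : List ℕ, τ <+: σ → τ ∈ T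

/-- `RankLE T σ β` : `σ` is ranked in `T` with rank at most `β`
(every child of `σ` in `T` has rank strictly less than `β`). -/
inductive RankLE (T : Set (List ℕ)) : List ℕ → Ordinal → Prop
  | intro (σ : List ℕ) (β : Ordinal) (g : ℕ → Ordinal)
      (hlt : ∀ n : ℕ, σ ++ [n] ∈ T → g n < β)
      (h : ∀ n : ℕ, σ ++ [n] ∈ T → RankLE T (σ ++ [n]) (g n)) : RankLE T σ β

/-- The AF `F_T` built from a tree `T`: arguments are `(false, σ)` (the `a_σ`'s)
and `(true, σ)` (the `b_σ`'s) for `σ ∈ T`; `b_σ` attacks `a_{σ⁻}` and `a_σ` attacks `b_σ`. -/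
def ftAtt (T : Set (List ℕ)) : Bool × List ℕ → Bool × List ℕ → Prop := fun x y =>
  (x.2 ∈ T ∧ x.1 = true ∧ y.1 = false ∧ x.2 ≠ [] ∧ y.2 = x.2.dropLast) ∨
  (x.2 ∈ T ∧ x.1 = false ∧ y.1 = true ∧ y.2 = x.2)

/-- `π` is an infinite path through the tree `T`. -/
def IsPath (T : Set (List ℕ)) (π : ℕ → ℕ) : Prop :=
  ∀ n : ℕ, (List.ofFn fun i : Fin n => π i) ∈ T

/-!
The grounded extension is the least fixed point of the monotone defense operator, so it lies
inside every set `S` with `defenseFn S ⊆ S`. The `b`'s together with the `a_τ` for `τ` on no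
path form such a set: if `τ` lies on a path `π`, the attacker `b_{τ ++ [π |τ|]}` of `a_τ` can only
be countered by `a_{τ ++ [π |τ|]}`, which again lies on a path. Conversely, if `a_τ` is not
grounded, some attacker `b_{τ ++ [n]}` is not countered by the grounded extension, i.e.
`a_{τ ++ [n]}` is not grounded either; iterating this choice builds a path through `σ`.
-/

open OrderHom

section Grounded

variable {A : Type*} (att : A → A → Prop)

theorem defenseFn_mono : Monotone (defenseFn att) := fun _ _ hST _ hx y hy =>
  let ⟨z, hz, hzy⟩ := hx y hy
  ⟨z, hST hz, hzy⟩

def defenseHom : Set A →o Set A := ⟨defenseFn att, defenseFn_mono att⟩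

variable {att}

theorem IsGrounded.eq_lfp {Gr : Set A} (h : IsGrounded att Gr) : Gr = lfp (defenseHom att) :=
  le_antisymm (h.2 _ (map_lfp (defenseHom att))) (lfp_le_fixed _ h.1)

theorem IsGrounded.subset_of_defenseFn_subset {Gr S : Set A} (h : IsGrounded att Gr)
    (hS : defenseFn att S ⊆ S) : Gr ⊆ S :=
  h.eq_lfp ▸ lfp_le _ hS

end Grounded

theorem ofFn_prefix_ofFn (π : ℕ → ℕ) {m n : ℕ} (h : m ≤ n) :
    (List.ofFn fun i : Fin m => π i) <+: List.ofFn fun i : Fin n => π i := by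
  obtain ⟨d, rfl⟩ := Nat.exists_eq_add_of_le h
  rw [List.ofFn_add]
  exact List.prefix_append _ _

theorem exists_seq_ofFn_eq_of_prefix_chain (ρ : ℕ → List ℕ) (hρ : ∀ k, ρ k <+: ρ (k + 1))
    (hlen : ∀ k, (ρ k).length = (ρ 0).length + k) :
    ∃ π : ℕ → ℕ, ∀ k, (List.ofFn fun i : Fin ((ρ 0).length + k) => π i) = ρ k := by
  have hmono : ∀ {k m}, k ≤ m → ρ k <+: ρ m := fun h =>
    Nat.le_induction (List.prefix_refl _) (fun _ _ ih => ih.trans (hρ _)) _ h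
  refine ⟨fun i => (ρ (i + 1)).getD i 0, fun k =>
    List.ext_getElem (by rw [List.length_ofFn, hlen k]) fun i _ hik => ?_⟩
  have hi' : i < (ρ (i + 1)).length := by rw [hlen]; omega
  rw [List.getElem_ofFn]
  dsimp only
  rw [List.getD_eq_getElem _ _ hi',
    (hmono (Nat.le_add_right (i + 1) k)).getElem hi',
    (hmono (Nat.le_add_left k (i + 1))).getElem hik]

theorem exists_seq_of_forall_exists_append {Q : List ℕ → Prop}
    (hQ : ∀ τ, Q τ → ∃ n, Q (τ ++ [n])) {σ : List ℕ} (hσ : Q σ) :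
    ∃ π : ℕ → ℕ, σ = (List.ofFn fun i : Fin σ.length => π i) ∧
      ∀ k, Q (List.ofFn fun i : Fin (σ.length + k) => π i) := by
  choose! next hnext using hQ
  let ρ : ℕ → List ℕ := fun k => (fun τ => τ ++ [next τ])^[k] σ
  have hρ_succ : ∀ k, ρ (k + 1) = ρ k ++ [next (ρ k)] := fun k =>
    Function.iterate_succ_apply' _ k σ
  have hQρ : ∀ k, Q (ρ k) := fun k => by
    induction k with
    | zero => exact hσ
    | succ k ih => rw [hρ_succ]; exact hnext _ ih
  have hlen : ∀ k, (ρ k).length = (ρ 0).length + k := fun k => by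
    induction k with
    | zero => rfl
    | succ k ih => rw [hρ_succ, List.length_append, ih]; rfl
  obtain ⟨π, hπ⟩ := exists_seq_ofFn_eq_of_prefix_chain ρ
    (fun k => hρ_succ k ▸ List.prefix_append _ _) hlen
  exact ⟨π, (hπ 0).symm, fun k => hπ k ▸ hQρ k⟩

section Tree

variable {T : Set (List ℕ)}

theorem ftAtt_false_iff {y : Bool × List ℕ} {τ : List ℕ} :
    ftAtt T y (false, τ) ↔ ∃ n, τ ++ [n] ∈ T ∧ y = (true, τ ++ [n]) := by
  obtain ⟨b, ρ⟩ := y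
  constructor
  · rintro (⟨hρ, rfl, -, hne, hdrop⟩ | ⟨-, -, h, -⟩)
    · have hρ_eq : ρ = τ ++ [ρ.getLast hne] := by
        simp only at hdrop
        rw [hdrop, List.dropLast_append_getLast]
      exact ⟨ρ.getLast hne, hρ_eq ▸ hρ, by rw [← hρ_eq]⟩
    · cases h
  · rintro ⟨n, hn, h⟩
    simp only [Prod.mk.injEq] at h
    obtain ⟨rfl, rfl⟩ := h
    exact Or.inl ⟨hn, rfl, rfl, by simp, by simp⟩

theorem ftAtt_true_iff {y : Bool × List ℕ} {τ : List ℕ} :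
    ftAtt T y (true, τ) ↔ y = (false, τ) ∧ τ ∈ T := by
  obtain ⟨b, ρ⟩ := y
  constructor
  · rintro (⟨-, -, h, -⟩ | ⟨hρ, rfl, -, rfl⟩)
    · cases h
    · exact ⟨rfl, hρ⟩
  · rintro ⟨h, hτ⟩
    simp only [Prod.mk.injEq] at h
    obtain ⟨rfl, rfl⟩ := h
    exact Or.inr ⟨hτ, rfl, rfl, rfl⟩

def IsOnPath (T : Set (List ℕ)) (σ : List ℕ) : Prop :=
  ∃ π : ℕ → ℕ, IsPath T π ∧ σ = List.ofFn (fun i : Fin σ.length => π i)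

theorem IsOnPath.exists_append {σ : List ℕ} (h : IsOnPath T σ) :
    ∃ n, σ ++ [n] ∈ T ∧ IsOnPath T (σ ++ [n]) := by
  obtain ⟨π, hπ, hσ⟩ := h
  have hext : σ ++ [π σ.length] = List.ofFn fun i : Fin (σ.length + 1) => π i := by
    rw [List.ofFn_succ_last]
    simp only [Fin.val_castSucc, Fin.val_last]
    rw [← hσ]
  exact ⟨π σ.length, hext ▸ hπ _, π, hπ, by simpa using hext⟩

theorem not_isOnPath_of_mem_grounded {Gr : Set (Bool × List ℕ)} (hGr : IsGrounded (ftAtt T) Gr)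
    {σ : List ℕ} (h : (false, σ) ∈ Gr) : ¬ IsOnPath T σ := by
  have hS : defenseFn (ftAtt T) {x | x.1 = false → ¬ IsOnPath T x.2} ⊆
      {x | x.1 = false → ¬ IsOnPath T x.2} := by
    rintro ⟨b, τ⟩ hdef rfl hτ
    obtain ⟨n, hnT, hn⟩ := hτ.exists_append
    obtain ⟨z, hz, hzatt⟩ := hdef _ (ftAtt_false_iff.2 ⟨n, hnT, rfl⟩)
    obtain ⟨rfl, -⟩ := ftAtt_true_iff.1 hzatt
    exact hz rfl hn
  exact hGr.subset_of_defenseFn_subset hS h rfl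

theorem exists_append_not_mem {Gr : Set (Bool × List ℕ)} (hGr : defenseFn (ftAtt T) Gr ⊆ Gr)
    {τ : List ℕ} (h : (false, τ) ∉ Gr) : ∃ n, τ ++ [n] ∈ T ∧ (false, τ ++ [n]) ∉ Gr := by
  by_contra! hall
  refine h (hGr fun y hy => ?_)
  obtain ⟨n, hn, rfl⟩ := ftAtt_false_iff.1 hy
  exact ⟨_, hall n hn, ftAtt_true_iff.2 ⟨rfl, hn⟩⟩

theorem isOnPath_of_not_mem (hT : IsTree T) {Gr : Set (Bool × List ℕ)}
    (hGr : defenseFn (ftAtt T) Gr ⊆ Gr) {σ : List ℕ} (hσ : σ ∈ T) (h : (false, σ) ∉ Gr) :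
    IsOnPath T σ := by
  obtain ⟨π, hσπ, hπ⟩ := exists_seq_of_forall_exists_append
    (Q := fun τ => τ ∈ T ∧ (false, τ) ∉ Gr)
    (fun _ hτ => (exists_append_not_mem hGr hτ.2).imp fun _ => id) ⟨hσ, h⟩
  exact ⟨π, fun n => hT _ (hπ n).1 _ (ofFn_prefix_ofFn π (by omega)), hσπ⟩

end Tree

/-- In `F_T`, the argument `a_σ` belongs to the grounded extension iff no
infinite path of `T` extends `σ`. -/
theorem ft_grounded_iff_no_path (T : Set (List ℕ)) (hT : IsTree T)
    (Gr : Set (Bool × List ℕ)) (hGr : IsGrounded (ftAtt T) Gr)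
    (σ : List ℕ) (hσ : σ ∈ T) :
    (false, σ) ∈ Gr ↔
      ¬ ∃ π : ℕ → ℕ, IsPath T π ∧ σ = List.ofFn (fun i : Fin σ.length => π i) :=
  ⟨not_isOnPath_of_mem_grounded hGr, not_imp_comm.1 (isOnPath_of_not_mem hT hGr.1.le hσ)⟩
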